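/- Fix an integer B ≥ 1. Let (Ω, 𝓕, P) be a probability space, let V : Ω → ℝ be uniformly distributed on [0,1], and for each n let A_n : Ω → ℕ take values in {0,1,…,B}, be independent of V, and satisfy P(A_n = j) → 1/(B+1) as n → ∞ for every j ∈ {0,1,…,B}. Set U_n = (A_n + V)/(B+1), and let g : ℝ → ℝ satisfy Φ(g(u)) = u for all u ∈ (0,1), where Φ is the cumulative distribution function of the standard normal distribution N(0,1). Then s_n = g(U_n) converges in distribution to N(0,1); that is, for every t ∈ ℝ, P(g(U_n) ≤ t) → Φ(t) as n → ∞. -/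
import Mathlib


open MeasureTheory ProbabilityTheory Filter

/-- Sum of clamps identity: for `0 ≤ x ≤ B+1`,
`∑_{j=0}^{B} clamp(x-j) = x`. -/
lemma clamp_sum (B : ℕ) (x : ℝ) (hx0 : 0 ≤ x) (hx1 : x ≤ (B : ℝ) + 1) :
    ∑ j ∈ Finset.range (B + 1), max (min (x - (j : ℝ)) 1) 0 = x := by
  induction B with
  | zero =>
      have h1 : x ≤ 1 := by simpa using hx1
      simp only [zero_add, Finset.sum_range_one, Nat.cast_zero, sub_zero]
      rw [min_eq_left h1, max_eq_left hx0]
  | succ B ih =>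
      rw [Finset.sum_range_succ]
      by_cases h : x ≤ (B : ℝ) + 1
      · rw [ih h]
        have hmin : min (x - ((B + 1 : ℕ) : ℝ)) 1 ≤ 0 := by
          push_cast
          exact le_trans (min_le_left _ _) (by linarith)
        rw [max_eq_right hmin, add_zero]
      · push_neg at h
        have h1 : ∀ j ∈ Finset.range (B + 1), max (min (x - (j : ℝ)) 1) 0 = 1 := by
          intro j hj
          have hjB : (j : ℝ) ≤ B := by
            exact_mod_cast Nat.lt_succ_iff.mp (Finset.mem_range.mp hj)
          have : (1 : ℝ) ≤ x - j := by linarith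
          rw [min_eq_right this, max_eq_left (by norm_num)]
        rw [Finset.sum_congr rfl h1, Finset.sum_const, Finset.card_range]
        have hx1' : x ≤ (B : ℝ) + 2 := by push_cast at hx1; linarith
        have h2 : x - ((B + 1 : ℕ) : ℝ) ≤ 1 := by push_cast; linarith
        have h3 : (0 : ℝ) ≤ x - ((B + 1 : ℕ) : ℝ) := by push_cast; linarith
        rw [min_eq_left h2, max_eq_left h3]
        push_cast
        ring

/-- If `V` is uniform on `[0,1]`, each `A n` takes values in `{0,…,B}`, is
independent of `V`, and `P(A n = j) → 1/(B+1)` for every `j ≤ B`, then with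
`Uₙ = (Aₙ + V)/(B+1)` and `g` a right inverse on `(0,1)` of the standard normal cdf `Φ`,
the residual `sₙ = g(Uₙ)` converges in distribution to `N(0,1)`. -/
theorem bootstrap_residual_tendsto_gaussian
    (B : ℕ) (hB : 1 ≤ B)
    {Ω : Type*} [MeasurableSpace Ω] (P : Measure Ω) [IsProbabilityMeasure P]
    (V : Ω → ℝ) (hVmeas : Measurable V)
    (hV : P.map V = volume.restrict (Set.Icc (0 : ℝ) 1))
    (A : ℕ → Ω → ℕ) (hAmeas : ∀ n, Measurable (A n))
    (hAB : ∀ n ω, A n ω ≤ B)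
    (hInd : ∀ n, IndepFun (A n) V P)
    (hConv : ∀ j ≤ B,
      Tendsto (fun n => (P {ω | A n ω = j}).toReal) atTop
        (nhds (1 / ((B : ℝ) + 1))))
    (g : ℝ → ℝ)
    (hg : ∀ u ∈ Set.Ioo (0 : ℝ) 1, cdf (gaussianReal 0 1) (g u) = u) :
    ∀ t : ℝ,
      Tendsto
        (fun n => (P {ω | g (((A n ω : ℝ) + V ω) / ((B : ℝ) + 1)) ≤ t}).toReal)
        atTop (nhds (cdf (gaussianReal 0 1) t)) := by
  intro t
  set c : ℝ := cdf (gaussianReal 0 1) t with hc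
  have hc0 : 0 ≤ c := cdf_nonneg _ _
  have hc1 : c ≤ 1 := cdf_le_one _ _
  set x : ℝ := c * ((B : ℝ) + 1) with hxdef
  have hBpos : (0 : ℝ) < (B : ℝ) + 1 := by positivity
  have hx0 : 0 ≤ x := by positivity
  have hx1 : x ≤ (B : ℝ) + 1 := by
    calc x ≤ 1 * ((B : ℝ) + 1) := mul_le_mul_of_nonneg_right hc1 (le_of_lt hBpos)
      _ = (B : ℝ) + 1 := one_mul _
  -- law of V on points and half-lines
  have hVpt : ∀ y : ℝ, P (V ⁻¹' {y}) = 0 := by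
    intro y
    rw [← Measure.map_apply hVmeas (measurableSet_singleton y), hV,
      Measure.restrict_apply (measurableSet_singleton y)]
    exact measure_mono_null Set.inter_subset_left Real.volume_singleton
  have hVIic : ∀ y : ℝ, P (V ⁻¹' Set.Iic y) = ENNReal.ofReal (min y 1) := by
    intro y
    rw [← Measure.map_apply hVmeas measurableSet_Iic, hV,
      Measure.restrict_apply measurableSet_Iic]
    have hset : Set.Iic y ∩ Set.Icc (0 : ℝ) 1 = Set.Icc 0 (min y 1) := by
      ext z
      simp only [Set.mem_inter_iff, Set.mem_Iic, Set.mem_Icc, le_min_iff]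
      tauto
    rw [hset, Real.volume_Icc, sub_zero]
  -- a.e. the bad events do not occur
  have hnull : ∀ n, ∀ᵐ ω ∂P, 0 < V ω ∧ V ω < 1 ∧ (A n ω : ℝ) + V ω ≠ x := by
    intro n
    have h1 : P {ω | V ω ≤ 0} = 0 := by
      have := hVIic 0
      simp only [min_eq_left (by norm_num : (0:ℝ) ≤ 1), ENNReal.ofReal_zero] at this
      exact this
    have h2 : P {ω | 1 ≤ V ω} = 0 := by
      have : ({ω | 1 ≤ V ω} : Set Ω) = V ⁻¹' Set.Ici 1 := rfl
      rw [this, ← Measure.map_apply hVmeas measurableSet_Ici, hV,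
        Measure.restrict_apply measurableSet_Ici]
      have hset : Set.Ici (1 : ℝ) ∩ Set.Icc 0 1 = {1} := by
        ext z
        simp only [Set.mem_inter_iff, Set.mem_Ici, Set.mem_Icc, Set.mem_singleton_iff]
        constructor
        · rintro ⟨ha, _, hb⟩; exact le_antisymm hb ha
        · rintro rfl; norm_num
      rw [hset]
      exact Real.volume_singleton
    have h3 : P {ω | (A n ω : ℝ) + V ω = x} = 0 := by
      refine measure_mono_null (fun ω hω => ?_) (measure_iUnion_null
        (fun j : ℕ => hVpt (x - j)))
      simp only [Set.mem_iUnion, Set.mem_preimage, Set.mem_singleton_iff]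
      exact ⟨A n ω, by have : (A n ω : ℝ) + V ω = x := hω; linarith⟩
    have a1 : ∀ᵐ ω ∂P, ω ∉ {ω | V ω ≤ 0} := measure_eq_zero_iff_ae_notMem.mp h1
    have a2 : ∀ᵐ ω ∂P, ω ∉ {ω | 1 ≤ V ω} := measure_eq_zero_iff_ae_notMem.mp h2
    have a3 : ∀ᵐ ω ∂P, ω ∉ {ω | (A n ω : ℝ) + V ω = x} := measure_eq_zero_iff_ae_notMem.mp h3
    filter_upwards [a1, a2, a3] with ω hω1 hω2 hω3
    exact ⟨lt_of_not_ge hω1, lt_of_not_ge hω2, hω3⟩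
  -- step 1: the event equals {A + V ≤ x} a.e.
  have hstep1 : ∀ n, P {ω | g (((A n ω : ℝ) + V ω) / ((B : ℝ) + 1)) ≤ t}
      = P {ω | (A n ω : ℝ) + V ω ≤ x} := by
    intro n
    apply measure_congr
    rw [eventuallyEq_set]
    filter_upwards [hnull n] with ω hω
    obtain ⟨hV0, hV1, hne⟩ := hω
    show (g (((A n ω : ℝ) + V ω) / ((B : ℝ) + 1)) ≤ t) ↔ ((A n ω : ℝ) + V ω ≤ x)
    have ha0 : (0 : ℝ) ≤ (A n ω : ℝ) := Nat.cast_nonneg _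
    have haB : (A n ω : ℝ) ≤ B := Nat.cast_le.mpr (hAB n ω)
    set u : ℝ := ((A n ω : ℝ) + V ω) / ((B : ℝ) + 1) with hu
    have hu0 : 0 < u := div_pos (by linarith) hBpos
    have hu1 : u < 1 := (div_lt_one hBpos).mpr (by linarith)
    have hgu : cdf (gaussianReal 0 1) (g u) = u := hg u ⟨hu0, hu1⟩
    constructor
    · intro h
      have hmc : cdf (gaussianReal 0 1) (g u) ≤ cdf (gaussianReal 0 1) t :=
        monotone_cdf _ h
      rw [hgu] at hmc
      have : (A n ω : ℝ) + V ω ≤ c * ((B : ℝ) + 1) := (div_le_iff₀ hBpos).mp hmc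
      exact this
    · intro h
      have hlt : (A n ω : ℝ) + V ω < x := lt_of_le_of_ne h hne
      have huc : u < c := (div_lt_iff₀ hBpos).mpr hlt
      by_contra hgt
      push_neg at hgt
      have : cdf (gaussianReal 0 1) t ≤ cdf (gaussianReal 0 1) (g u) :=
        monotone_cdf _ (le_of_lt hgt)
      rw [hgu] at this
      exact absurd (lt_of_le_of_lt this huc) (lt_irrefl c)
  -- step 2: compute the measure of {A + V ≤ x}
  have hstep2 : ∀ n, P {ω | (A n ω : ℝ) + V ω ≤ x}
      = ∑ j ∈ Finset.range (B + 1),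
        P (A n ⁻¹' {j}) * ENNReal.ofReal (min (x - (j : ℝ)) 1) := by
    intro n
    have hset : {ω | (A n ω : ℝ) + V ω ≤ x}
        = ⋃ j ∈ Finset.range (B + 1), (A n ⁻¹' {j} ∩ V ⁻¹' Set.Iic (x - (j : ℝ))) := by
      ext ω
      simp only [Set.mem_setOf_eq, Set.mem_iUnion, Set.mem_inter_iff, Set.mem_preimage,
        Set.mem_singleton_iff, Set.mem_Iic, Finset.mem_range, exists_prop]
      constructor
      · intro h
        exact ⟨A n ω, Nat.lt_succ_of_le (hAB n ω), rfl, by linarith⟩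
      · rintro ⟨j, _, hAj, hVj⟩
        have : (A n ω : ℝ) = (j : ℝ) := by exact_mod_cast congrArg (Nat.cast : ℕ → ℝ) hAj
        linarith
    rw [hset, measure_biUnion_finset]
    · refine Finset.sum_congr rfl fun j _ => ?_
      rw [(hInd n).measure_inter_preimage_eq_mul _ _ (measurableSet_singleton j)
        measurableSet_Iic, hVIic]
    · intro i _ j _ hij
      refine Set.disjoint_left.mpr fun ω hωi hωj => ?_
      exact hij (hωi.1.symm.trans hωj.1)
    · intro j _
      exact ((hAmeas n) (measurableSet_singleton j)).inter (hVmeas measurableSet_Iic)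
  -- step 3: pass to real numbers
  have hstep3 : ∀ n, (P {ω | g (((A n ω : ℝ) + V ω) / ((B : ℝ) + 1)) ≤ t}).toReal
      = ∑ j ∈ Finset.range (B + 1),
        (P {ω | A n ω = j}).toReal * max (min (x - (j : ℝ)) 1) 0 := by
    intro n
    rw [hstep1 n, hstep2 n, ENNReal.toReal_sum (fun j _ =>
      ENNReal.mul_ne_top (measure_ne_top P _) ENNReal.ofReal_ne_top)]
    refine Finset.sum_congr rfl fun j _ => ?_
    rw [ENNReal.toReal_mul, ENNReal.toReal_ofReal']
    rfl
  -- step 4: take limits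
  have hlim : Tendsto (fun n => ∑ j ∈ Finset.range (B + 1),
      (P {ω | A n ω = j}).toReal * max (min (x - (j : ℝ)) 1) 0) atTop
      (nhds (∑ j ∈ Finset.range (B + 1),
        (1 / ((B : ℝ) + 1)) * max (min (x - (j : ℝ)) 1) 0)) := by
    refine tendsto_finset_sum _ fun j hj => ?_
    exact (hConv j (Nat.lt_succ_iff.mp (Finset.mem_range.mp hj))).mul_const _
  have hsum : ∑ j ∈ Finset.range (B + 1),
      (1 / ((B : ℝ) + 1)) * max (min (x - (j : ℝ)) 1) 0 = c := by
    rw [← Finset.mul_sum, clamp_sum B x hx0 hx1, hxdef]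
    field_simp
  rw [hsum] at hlim
  exact Tendsto.congr (fun n => (hstep3 n).symm) hlim
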